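/- arXiv:2603.22124 — 3 statements merged into one kernel-verified Lean document; each statement's English description precedes it below -/
import Mathlib

section
/- For all positive integers M and q with M ≥ 1, ∑_{(m,m₁,ℓ): m·m₁·ℓ ≤ M, m, m₁, ℓ pairwise coprime, gcd(m·m₁·ℓ, q) = 1} μ(m)·τ(m)·μ²(m₁)·μ²(ℓ)/(φ(m)·φ(m₁)·φ(ℓ)) = 1, where the sum runs over ordered triples of positive integers (m,m₁,ℓ) and τ(m) is the number of divisors of m. -/
open scoped Real
open Complex

noncomputable section

/-- Value of the Dirichlet `L`-function at the central point `1/2`. -/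
def Lhalf {q : ℕ} (χ : DirichletCharacter ℂ q) : ℂ :=
  if h : q = 0 then 0 else
    haveI : NeZero q := ⟨h⟩
    DirichletCharacter.LFunction χ (1 / 2)

/-- The root number `ε(χ) = q^{-1/2} ∑_{t mod q} χ(t) e(t/q)`. -/
def rootNumber {q : ℕ} (χ : DirichletCharacter ℂ q) : ℂ :=
  if h : q = 0 then 0 else
    haveI : NeZero q := ⟨h⟩
    (Real.sqrt q)⁻¹ *
      ∑ t : ZMod q, χ t * Complex.exp (2 * Real.pi * Complex.I * (t.val : ℝ) / q)

/-- A real representative of the angle `θ_χ ∈ ℝ/ℤ` with `ε(χ) = e(θ_χ)`. -/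
def realAngle {q : ℕ} (χ : DirichletCharacter ℂ q) : ℝ :=
  Complex.arg (rootNumber χ) / (2 * Real.pi)

/-- Sum over even primitive Dirichlet characters mod `q`. -/
def evenPrimSum (q : ℕ) (F : DirichletCharacter ℂ q → ℂ) : ℂ :=
  if h : q = 0 then 0 else
    haveI : NeZero q := ⟨h⟩
    ∑ χ : DirichletCharacter ℂ q,
      {χ' : DirichletCharacter ℂ q | χ'.IsPrimitive ∧ χ' (-1) = 1}.indicator F χ

/-- `φ⁺(q)`: the number of even primitive Dirichlet characters mod `q`. -/
def phiPlus (q : ℕ) : ℕ :=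
  Nat.card {χ : DirichletCharacter ℂ q // χ.IsPrimitive ∧ χ (-1) = 1}

/-- `G = ∑_{k ≤ M, (k,q)=1} μ²(k)/φ(k)`. -/
def Gsum (q : ℕ) (M : ℝ) : ℝ :=
  ∑ k ∈ Finset.Icc 1 ⌊M⌋₊,
    if Nat.Coprime k q then ((ArithmeticFunction.moebius k : ℤ) : ℝ) ^ 2 / (Nat.totient k : ℝ)
    else 0

/-- The mollifier coefficients `x_m`. -/
def xcoef (q : ℕ) (M : ℝ) (m : ℕ) : ℝ :=
  if Nat.Coprime m q then
    ((ArithmeticFunction.moebius m : ℤ) : ℝ) * m / (Nat.totient m : ℝ) * (Gsum q M)⁻¹ *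
      ∑ l ∈ Finset.Icc 1 ⌊M / (m : ℝ)⌋₊,
        if Nat.Coprime l (m * q) then
          ((ArithmeticFunction.moebius l : ℤ) : ℝ) ^ 2 / (Nat.totient l : ℝ)
        else 0
  else 0

/-- The mollifier `M(χ) = ∑_{m ≤ M} x_m χ(m) m^{-1/2}`. -/
def mollifier {q : ℕ} (M : ℝ) (χ : DirichletCharacter ℂ q) : ℂ :=
  ∑ m ∈ Finset.Icc 1 ⌊M⌋₊, (xcoef q M m : ℂ) * χ (m : ZMod q) / (Real.sqrt m : ℂ)

/-!
Since `f` and `g` vanish off the squarefree numbers, and a product `a * b * c` is squarefree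
exactly when `a`, `b`, `c` are squarefree and pairwise coprime, the sum equals
`∑_{n ≤ M, (n, q) = 1} μ²(n) (f * g * g)(n)` with the Dirichlet convolution. That convolution is
multiplicative and at a prime equals `f p + 2 g p = -2 / φ p + 2 / φ p = 0`, so `μ² · (f * g * g)`
is the identity `δ` and only `n = 1` survives.
-/

theorem Nat.squarefree_mul_mul_iff {a b c : ℕ} :
    Squarefree (a * b * c) ↔
      (a.Coprime b ∧ a.Coprime c ∧ b.Coprime c) ∧ Squarefree a ∧ Squarefree b ∧ Squarefree c := by
  rw [Nat.squarefree_mul_iff, Nat.squarefree_mul_iff, Nat.coprime_mul_iff_left]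
  tauto

namespace ArithmeticFunction

open scoped Moebius

variable {R : Type*}

def totient : ArithmeticFunction ℕ := ⟨Nat.totient, Nat.totient_zero⟩

theorem totient_apply (n : ℕ) : totient n = n.totient := rfl

theorem isMultiplicative_totient : IsMultiplicative totient :=
  IsMultiplicative.iff_ne_zero.2 ⟨Nat.totient_one, fun _ _ h => Nat.totient_mul h⟩

theorem IsMultiplicative.mul_apply_prime [CommSemiring R] {F G : ArithmeticFunction R}
    (hF : F.IsMultiplicative) (hG : G.IsMultiplicative) {p : ℕ} (hp : p.Prime) :
    (F * G) p = F p + G p := by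
  rw [mul_apply, Nat.sum_divisorsAntidiagonal (fun x y => F x * G y), hp.divisors,
    Finset.sum_pair hp.one_lt.ne, Nat.div_one, Nat.div_self hp.pos, hF.map_one, hG.map_one,
    one_mul, mul_one, add_comm]

theorem IsMultiplicative.moebius_sq_pmul_eq_one [CommRing R] {F : ArithmeticFunction R}
    (hF : F.IsMultiplicative) (hprime : ∀ p : ℕ, p.Prime → F p = 0) :
    ((μ : ArithmeticFunction R).ppow 2).pmul F = 1 := by
  refine (IsMultiplicative.eq_iff_eq_on_prime_powers _
    (isMultiplicative_moebius.intCast.ppow.pmul hF) _ isMultiplicative_one).2 fun p i hp => ?_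
  rcases Nat.lt_trichotomy i 1 with hi | rfl | hi
  · simp [Nat.lt_one_iff.1 hi, hF.map_one]
  · simp [hprime p hp, one_apply_ne hp.ne_one]
  · have hpi : p ^ i ≠ 1 := (Nat.one_lt_pow (by omega) hp.one_lt).ne'
    simp [moebius_apply_prime_pow hp (by omega : i ≠ 0), hi.ne', one_apply_ne hpi]

theorem moebius_sq_mul_mul_mul_eq_ite [CommRing R] {F G H : ArithmeticFunction R}
    (hF : ∀ n, ¬Squarefree n → F n = 0) (hG : ∀ n, ¬Squarefree n → G n = 0)
    (hH : ∀ n, ¬Squarefree n → H n = 0) (a b c : ℕ) :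
    (μ (a * b * c) : R) ^ 2 * (F a * G b * H c) =
      if a.Coprime b ∧ a.Coprime c ∧ b.Coprime c then F a * G b * H c else 0 := by
  have hμ : ∀ n, (μ n : R) ^ 2 = if Squarefree n then 1 else 0 := fun n => by
    rw [← Int.cast_pow, moebius_sq]
    split_ifs <;> simp
  simp only [hμ, Nat.squarefree_mul_mul_iff]
  by_cases ha : Squarefree a <;> by_cases hb : Squarefree b <;> by_cases hc : Squarefree c <;>
    simp [ha, hb, hc, hF, hG, hH]

theorem sum_filter_mul_mul_eq_mul_apply [CommSemiring R] (F G H : ArithmeticFunction R)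
    {M n : ℕ} (hn : n ≠ 0) (hnM : n ≤ M) :
    ∑ t ∈ ((Finset.Icc 1 M ×ˢ Finset.Icc 1 M) ×ˢ Finset.Icc 1 M).filter
        (fun t => t.1.1 * t.1.2 * t.2 = n), F t.1.1 * G t.1.2 * H t.2 =
      (F * (G * H)) n := by
  simp_rw [mul_apply, Finset.mul_sum]
  rw [Finset.sum_sigma']
  refine Finset.sum_bij' (fun t _ => ⟨(t.1.1, t.1.2 * t.2), (t.1.2, t.2)⟩)
    (fun x _ => ((x.1.1, x.2.1), x.2.2)) ?_ ?_ (fun _ _ => rfl) ?_ (fun _ _ => by rw [mul_assoc])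
  · rintro ⟨⟨a, b⟩, c⟩ ht
    simp only [Finset.mem_filter, Finset.mem_product, Finset.mem_Icc] at ht
    simp only [Finset.mem_sigma, Nat.mem_divisorsAntidiagonal]
    exact ⟨⟨by rw [← ht.2, mul_assoc], hn⟩, trivial, Nat.mul_ne_zero (by omega) (by omega)⟩
  · rintro ⟨⟨a, d⟩, ⟨b, c⟩⟩ hx
    simp only [Finset.mem_sigma, Nat.mem_divisorsAntidiagonal] at hx
    obtain ⟨⟨rfl, hn⟩, rfl, -⟩ := hx
    have hle : ∀ k, k ∣ a * (b * c) → 1 ≤ k ∧ k ≤ M := fun k hk =>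
      ⟨Nat.pos_of_dvd_of_pos hk (Nat.pos_of_ne_zero hn),
        (Nat.le_of_dvd (Nat.pos_of_ne_zero hn) hk).trans hnM⟩
    simp only [Finset.mem_filter, Finset.mem_product, mul_assoc, and_true, Finset.mem_Icc]
    exact ⟨⟨hle a (dvd_mul_right a _), hle b (dvd_mul_of_dvd_right (dvd_mul_right b c) a)⟩,
      hle c (dvd_mul_of_dvd_right (dvd_mul_left c b) a)⟩
  · rintro ⟨⟨a, d⟩, ⟨b, c⟩⟩ hx
    simp only [Finset.mem_sigma, Nat.mem_divisorsAntidiagonal] at hx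
    obtain ⟨-, rfl, -⟩ := hx
    rfl

theorem sum_pairwise_coprime_triples_eq_sum_moebius_sq_mul [CommRing R]
    {F G H : ArithmeticFunction R}
    (hF : ∀ n, ¬Squarefree n → F n = 0) (hG : ∀ n, ¬Squarefree n → G n = 0)
    (hH : ∀ n, ¬Squarefree n → H n = 0) (P : ℕ → Prop) [DecidablePred P] (M : ℕ) :
    ∑ t ∈ ((Finset.Icc 1 M ×ˢ Finset.Icc 1 M) ×ˢ Finset.Icc 1 M).filter
        (fun t => t.1.1 * t.1.2 * t.2 ≤ M ∧ Nat.Coprime t.1.1 t.1.2 ∧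
          Nat.Coprime t.1.1 t.2 ∧ Nat.Coprime t.1.2 t.2 ∧ P (t.1.1 * t.1.2 * t.2)),
        F t.1.1 * G t.1.2 * H t.2 =
      ∑ n ∈ (Finset.Icc 1 M).filter P, (μ n : R) ^ 2 * (F * (G * H)) n := by
  set B := (Finset.Icc 1 M ×ˢ Finset.Icc 1 M) ×ˢ Finset.Icc 1 M
  have hsplit : B.filter (fun t => t.1.1 * t.1.2 * t.2 ≤ M ∧ Nat.Coprime t.1.1 t.1.2 ∧
          Nat.Coprime t.1.1 t.2 ∧ Nat.Coprime t.1.2 t.2 ∧ P (t.1.1 * t.1.2 * t.2)) =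
      (B.filter (fun t => t.1.1 * t.1.2 * t.2 ≤ M ∧ P (t.1.1 * t.1.2 * t.2))).filter
        (fun t => Nat.Coprime t.1.1 t.1.2 ∧ Nat.Coprime t.1.1 t.2 ∧ Nat.Coprime t.1.2 t.2) := by
    rw [Finset.filter_filter]
    exact Finset.filter_congr fun _ _ => by tauto
  have hmaps : ∀ t ∈ B.filter (fun t => t.1.1 * t.1.2 * t.2 ≤ M ∧ P (t.1.1 * t.1.2 * t.2)),
      t.1.1 * t.1.2 * t.2 ∈ (Finset.Icc 1 M).filter P := by
    intro t ht
    simp only [B, Finset.mem_filter, Finset.mem_product, Finset.mem_Icc] at ht ⊢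
    exact ⟨⟨Nat.mul_pos (Nat.mul_pos ht.1.1.1.1 ht.1.1.2.1) ht.1.2.1, ht.2.1⟩, ht.2.2⟩
  rw [hsplit, Finset.sum_filter]
  simp_rw [← moebius_sq_mul_mul_mul_eq_ite hF hG hH]
  rw [← Finset.sum_fiberwise_of_maps_to hmaps]
  refine Finset.sum_congr rfl fun n hn => ?_
  simp only [Finset.mem_filter, Finset.mem_Icc] at hn
  have hfiber : (B.filter (fun t => t.1.1 * t.1.2 * t.2 ≤ M ∧ P (t.1.1 * t.1.2 * t.2))).filter
      (fun t => t.1.1 * t.1.2 * t.2 = n) = B.filter (fun t => t.1.1 * t.1.2 * t.2 = n) := by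
    rw [Finset.filter_filter]
    exact Finset.filter_congr fun t _ => ⟨And.right, fun h => ⟨h ▸ ⟨hn.1.2, hn.2⟩, h⟩⟩
  rw [hfiber, ← sum_filter_mul_mul_eq_mul_apply F G H (by omega) hn.1.2, Finset.mul_sum]
  refine Finset.sum_congr rfl fun t ht => ?_
  rw [(Finset.mem_filter.1 ht).2]

end ArithmeticFunction

namespace TripleUnitaryConvolution

open ArithmeticFunction
open scoped ArithmeticFunction.Moebius ArithmeticFunction.sigma

def f : ArithmeticFunction ℝ :=
  ((μ : ArithmeticFunction ℝ).pmul (σ 0 : ArithmeticFunction ℝ)).pdiv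
    (totient : ArithmeticFunction ℝ)

def g : ArithmeticFunction ℝ :=
  ((μ : ArithmeticFunction ℝ).ppow 2).pdiv (totient : ArithmeticFunction ℝ)

theorem f_apply (n : ℕ) : f n = (μ n : ℝ) * (n.divisors.card : ℝ) / (n.totient : ℝ) := by
  simp [f, sigma_zero_apply, totient_apply]

theorem g_apply (n : ℕ) : g n = (μ n : ℝ) ^ 2 / (n.totient : ℝ) := by
  simp [g, totient_apply]

theorem f_apply_mul_g_apply_mul_g_apply (a b c : ℕ) :
    f a * g b * g c = (μ a : ℝ) * (a.divisors.card : ℝ) * (μ b : ℝ) ^ 2 * (μ c : ℝ) ^ 2 /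
      ((a.totient : ℝ) * (b.totient : ℝ) * (c.totient : ℝ)) := by
  rw [f_apply, g_apply, g_apply]
  ring

theorem f_eq_zero_of_not_squarefree {n : ℕ} (hn : ¬Squarefree n) : f n = 0 := by
  simp [f_apply, moebius_eq_zero_of_not_squarefree hn]

theorem g_eq_zero_of_not_squarefree {n : ℕ} (hn : ¬Squarefree n) : g n = 0 := by
  simp [g_apply, moebius_eq_zero_of_not_squarefree hn]

theorem isMultiplicative_f : f.IsMultiplicative :=
  (isMultiplicative_moebius.intCast.pmul isMultiplicative_sigma.natCast).pdiv
    isMultiplicative_totient.natCast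

theorem isMultiplicative_g : g.IsMultiplicative :=
  isMultiplicative_moebius.intCast.ppow.pdiv isMultiplicative_totient.natCast

theorem f_mul_g_mul_g_apply_prime {p : ℕ} (hp : p.Prime) : (f * (g * g)) p = 0 := by
  have hτ : p.divisors.card = 2 := by
    rw [hp.divisors, Finset.card_pair hp.one_lt.ne]
  rw [isMultiplicative_f.mul_apply_prime (isMultiplicative_g.mul isMultiplicative_g) hp,
    isMultiplicative_g.mul_apply_prime isMultiplicative_g hp, f_apply, g_apply, hτ,
    moebius_apply_prime hp]
  push_cast
  ring

theorem moebius_sq_mul_f_mul_g_mul_g_apply (n : ℕ) :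
    (μ n : ℝ) ^ 2 * (f * (g * g)) n = if n = 1 then 1 else 0 := by
  have h := congrArg (· n) ((isMultiplicative_f.mul (isMultiplicative_g.mul isMultiplicative_g))
    |>.moebius_sq_pmul_eq_one fun _ hp => f_mul_g_mul_g_apply_prime hp)
  simpa [ppow_apply, one_apply] using h

end TripleUnitaryConvolution

open ArithmeticFunction TripleUnitaryConvolution in
theorem triple_unitary_convolution_identity_general (M q : ℕ) (hM : 1 ≤ M) :
    ∑ t ∈ ((Finset.Icc 1 M ×ˢ Finset.Icc 1 M) ×ˢ Finset.Icc 1 M).filter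
        (fun t => t.1.1 * t.1.2 * t.2 ≤ M ∧ Nat.Coprime t.1.1 t.1.2 ∧
          Nat.Coprime t.1.1 t.2 ∧ Nat.Coprime t.1.2 t.2 ∧
          Nat.Coprime (t.1.1 * t.1.2 * t.2) q),
      ((ArithmeticFunction.moebius t.1.1 : ℤ) : ℝ) * (t.1.1.divisors.card : ℝ) *
        ((ArithmeticFunction.moebius t.1.2 : ℤ) : ℝ) ^ 2 *
        ((ArithmeticFunction.moebius t.2 : ℤ) : ℝ) ^ 2 /
        ((Nat.totient t.1.1 : ℝ) * (Nat.totient t.1.2 : ℝ) * (Nat.totient t.2 : ℝ)) = 1 := by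
  simp only [← f_apply_mul_g_apply_mul_g_apply]
  rw [sum_pairwise_coprime_triples_eq_sum_moebius_sq_mul (fun _ => f_eq_zero_of_not_squarefree)
    (fun _ => g_eq_zero_of_not_squarefree) (fun _ => g_eq_zero_of_not_squarefree)
    (fun n => n.Coprime q) M]
  simp_rw [moebius_sq_mul_f_mul_g_mul_g_apply]
  rw [Finset.sum_ite_eq']
  simp [hM]

theorem triple_unitary_convolution_identity (M q : ℕ) (hM : 1 ≤ M) (hq : 0 < q) :
    ∑ t ∈ ((Finset.Icc 1 M ×ˢ Finset.Icc 1 M) ×ˢ Finset.Icc 1 M).filter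
        (fun t => t.1.1 * t.1.2 * t.2 ≤ M ∧ Nat.Coprime t.1.1 t.1.2 ∧
          Nat.Coprime t.1.1 t.2 ∧ Nat.Coprime t.1.2 t.2 ∧
          Nat.Coprime (t.1.1 * t.1.2 * t.2) q),
      ((ArithmeticFunction.moebius t.1.1 : ℤ) : ℝ) * (t.1.1.divisors.card : ℝ) *
        ((ArithmeticFunction.moebius t.1.2 : ℤ) : ℝ) ^ 2 *
        ((ArithmeticFunction.moebius t.2 : ℤ) : ℝ) ^ 2 /
        ((Nat.totient t.1.1 : ℝ) * (Nat.totient t.1.2 : ℝ) * (Nat.totient t.2 : ℝ)) = 1 :=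
  triple_unitary_convolution_identity_general M q hM
end
end

section
/- Let a : ℕ → ℝ be the multiplicative function supported on squarefree integers determined by a(1) = 1, a(p) = (√p + 3)/(p − 1) for every prime p, and a(n) = 0 if n is not squarefree. Then there is an absolute constant A > 0 such that for all real M ≥ 1, ∑_{n ≤ M} a(n) ≤ A·√M. -/
open scoped Real
open Complex

noncomputable section

/-!
Put `g n = a n * √n` and `h = g * μ`, so that `g = h * ζ`. Then
`∑_{n ≤ N} a n = ∑_{d ≤ N} h d / √d * ∑_{m ≤ N/d} 1 / √m ≤ 2 √N ∑_{d ≤ N} |h d| / d`,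
and the last sum is bounded by the Euler product `∏_p (1 + |h p| / p + |h p²| / p²)`.
This product converges: `g` is supported on squarefree numbers, so `h p = g p - 1 = O(p^{-1/2})`,
`h p² = -g p = O(1)` and `h` vanishes on higher prime powers.
-/

open ArithmeticFunction Finset
open scoped ArithmeticFunction.Moebius ArithmeticFunction.zeta

theorem mul_moebius_apply_prime_pow_succ {R : Type*} [Ring R] (g : ArithmeticFunction R)
    {p : ℕ} (hp : p.Prime) (k : ℕ) :
    (g * μ) (p ^ (k + 1)) = g (p ^ (k + 1)) - g (p ^ k) := by
  have hsum (j : ℕ) : ∑ i ∈ range (j + 1), (g * μ) (p ^ i) = g (p ^ j) := by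
    rw [← Nat.sum_divisors_prime_pow hp, ← coe_mul_zeta_apply, mul_assoc,
      coe_moebius_mul_coe_zeta, mul_one]
  rw [← hsum (k + 1), ← hsum k, sum_range_succ, add_sub_cancel_left]

theorem sum_Ioc_mul_mul_eq_sum_sum_of_map_mul {R : Type*} [CommSemiring R]
    (f g : ArithmeticFunction R) {w : ℕ → R} (hw : ∀ m n, w (m * n) = w m * w n) (N : ℕ) :
    ∑ n ∈ Ioc 0 N, (f * g) n * w n =
      ∑ n ∈ Ioc 0 N, f n * w n * ∑ m ∈ Ioc 0 (N / n), g m * w m := by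
  let fw : ArithmeticFunction R := ⟨fun n => f n * w n, by simp⟩
  let gw : ArithmeticFunction R := ⟨fun n => g n * w n, by simp⟩
  have hmul (n : ℕ) : (f * g) n * w n = (fw * gw) n := by
    simp only [mul_apply, sum_mul]
    refine sum_congr rfl fun x hx => ?_
    rw [← (Nat.mem_divisorsAntidiagonal.1 hx).1, hw]
    simp only [fw, gw, coe_mk]
    ring
  simp_rw [hmul]
  exact sum_Ioc_mul_eq_sum_sum fw gw N

theorem sum_Ioc_inv_sqrt_le (K : ℕ) : ∑ m ∈ Ioc 0 K, (√(m : ℝ))⁻¹ ≤ 2 * √(K : ℝ) := by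
  induction K with
  | zero => simp
  | succ K ih =>
    rw [sum_Ioc_succ_top K.zero_le]
    set s := √(K : ℝ)
    set t := √((K + 1 : ℕ) : ℝ)
    have hs : 0 ≤ s := Real.sqrt_nonneg _
    have ht : 0 < t := Real.sqrt_pos.2 (by positivity)
    have hts : t ^ 2 = s ^ 2 + 1 := by
      simp only [s, t, Real.sq_sqrt (Nat.cast_nonneg _)]
      push_cast; ring
    have hstep : t⁻¹ ≤ 2 * (t - s) := by
      rw [inv_le_iff_one_le_mul₀ ht]
      nlinarith [sq_nonneg (t - s)]
    linarith

theorem sum_Ioc_mul_zeta_div_sqrt_le (f : ArithmeticFunction ℝ) (N : ℕ) :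
    ∑ n ∈ Ioc 0 N, (f * ζ) n / √(n : ℝ) ≤ 2 * √(N : ℝ) * ∑ d ∈ Ioc 0 N, |f d| / d := by
  have hw (m n : ℕ) : (√((m * n : ℕ) : ℝ))⁻¹ = (√(m : ℝ))⁻¹ * (√(n : ℝ))⁻¹ := by
    rw [Nat.cast_mul, Real.sqrt_mul (Nat.cast_nonneg m), mul_inv]
  simp_rw [div_eq_mul_inv (_ : ℝ) (√_)]
  rw [sum_Ioc_mul_mul_eq_sum_sum_of_map_mul f ζ hw, mul_sum]
  refine sum_le_sum fun d hd => ?_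
  have hd : (0 : ℝ) < d := by exact_mod_cast (mem_Ioc.1 hd).1
  have hzeta : ∑ m ∈ Ioc 0 (N / d), (ζ : ArithmeticFunction ℝ) m * (√(m : ℝ))⁻¹ =
      ∑ m ∈ Ioc 0 (N / d), (√(m : ℝ))⁻¹ :=
    sum_congr rfl fun m hm => by simp [(mem_Ioc.1 hm).1.ne']
  have hquot : √((N / d : ℕ) : ℝ) ≤ √(N : ℝ) / √(d : ℝ) := by
    rw [← Real.sqrt_div' _ hd.le]
    exact Real.sqrt_le_sqrt Nat.cast_div_le
  rw [hzeta]
  calc f d * (√(d : ℝ))⁻¹ * ∑ m ∈ Ioc 0 (N / d), (√(m : ℝ))⁻¹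
      ≤ |f d| * (√(d : ℝ))⁻¹ * (2 * (√(N : ℝ) / √(d : ℝ))) := by
        gcongr
        · exact le_abs_self _
        · exact (sum_Ioc_inv_sqrt_le _).trans (by gcongr)
    _ = 2 * √(N : ℝ) * (|f d| / d) := by
        field_simp
        rw [Real.sq_sqrt hd.le]
        ring

theorem sum_Ioc_le_prod_primesBelow_tsum {f : ℕ → ℝ} (hf₁ : f 1 = 1)
    (hmul : ∀ {m n : ℕ}, m.Coprime n → f (m * n) = f m * f n) (hf : ∀ n, 0 ≤ f n)
    (hsum : ∀ {p : ℕ}, p.Prime → Summable fun k => f (p ^ k)) (N : ℕ) :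
    ∑ n ∈ Ioc 0 N, f n ≤ ∏ p ∈ (N + 1).primesBelow, ∑' k, f (p ^ k) := by
  have hasSum := (EulerProduct.summable_and_hasSum_smoothNumbers_prod_primesBelow_tsum hf₁ hmul
    (fun hp => by simpa only [Real.norm_of_nonneg (hf _)] using hsum hp) (N + 1)).2
  have hsmooth : ∀ n ∈ Ioc 0 N, n ∈ (N + 1).smoothNumbers := fun n hn =>
    Nat.mem_smoothNumbers_of_lt (mem_Ioc.1 hn).1 (Nat.lt_succ_of_le (mem_Ioc.1 hn).2)
  calc ∑ n ∈ Ioc 0 N, f n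
      = ∑ n ∈ (Ioc 0 N).subtype (· ∈ (N + 1).smoothNumbers), f n := by
        rw [sum_subtype_eq_sum_filter, filter_true_of_mem hsmooth]
    _ ≤ _ := sum_le_hasSum _ (fun n _ => hf n) hasSum

theorem sum_Ioc_abs_mul_moebius_div_le_exp {g : ArithmeticFunction ℝ} (hg : g.IsMultiplicative)
    (hsq : ∀ p k : ℕ, p.Prime → 2 ≤ k → g (p ^ k) = 0) {b : ℕ → ℝ} (hb : Summable b)
    (hb₀ : ∀ n, 0 ≤ b n) (hgb : ∀ p : ℕ, p.Prime → |g p - 1| / p + |g p| / p ^ 2 ≤ b p)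
    (N : ℕ) : ∑ d ∈ Ioc 0 N, |(g * μ) d| / d ≤ Real.exp (∑' n, b n) := by
  have hh : (g * μ).IsMultiplicative := hg.mul isMultiplicative_moebius.intCast
  set f : ℕ → ℝ := fun n => |(g * μ) n| / n
  have hf₁ : f 1 = 1 := by simp [f, hg.map_one]
  have hpow : ∀ p : ℕ, p.Prime → ∀ k, 3 ≤ k → f (p ^ k) = 0 := by
    intro p hp k hk
    obtain ⟨j, rfl⟩ : ∃ j, k = j + 1 := ⟨k - 1, by omega⟩
    simp only [f]
    rw [mul_moebius_apply_prime_pow_succ g hp, hsq p _ hp (by omega), hsq p _ hp (by omega),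
      sub_zero, abs_zero, zero_div]
  have hlocal : ∀ p : ℕ, p.Prime →
      ∑' k, f (p ^ k) = 1 + (|g p - 1| / p + |g p| / p ^ 2) := by
    intro p hp
    have h₁ := mul_moebius_apply_prime_pow_succ g hp 0
    have h₂ := mul_moebius_apply_prime_pow_succ g hp 1
    rw [hsq p 2 hp le_rfl] at h₂
    simp only [zero_add, pow_zero, pow_one, hg.map_one] at h₁ h₂
    rw [tsum_eq_sum (s := range 3) fun k hk => hpow p hp k (by simpa using hk)]
    simp only [f, sum_range_succ, sum_range_zero, pow_zero, pow_one, h₁, h₂, hh.map_one]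
    push_cast
    rw [abs_one, div_one, zero_sub, abs_neg]
    ring
  calc ∑ d ∈ Ioc 0 N, f d
      ≤ ∏ p ∈ (N + 1).primesBelow, ∑' k, f (p ^ k) := by
        refine sum_Ioc_le_prod_primesBelow_tsum hf₁ (fun hmn => ?_) (fun n => by positivity)
          (fun hp => summable_of_ne_finset_zero (s := range 3)
            fun k hk => hpow _ hp k (by simpa using hk)) N
        simp only [f, hh.map_mul_of_coprime hmn, abs_mul, Nat.cast_mul, mul_div_mul_comm]
    _ = ∏ p ∈ (N + 1).primesBelow, (1 + (|g p - 1| / p + |g p| / p ^ 2)) :=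
        prod_congr rfl fun p hp => hlocal p (Nat.prime_of_mem_primesBelow hp)
    _ ≤ Real.exp (∑ p ∈ (N + 1).primesBelow, (|g p - 1| / p + |g p| / p ^ 2)) :=
        Real.prod_one_add_le_exp_sum _ fun p => by positivity
    _ ≤ Real.exp (∑' n, b n) := by
        gcongr
        calc _ ≤ ∑ p ∈ (N + 1).primesBelow, b p :=
              sum_le_sum fun p hp => hgb p (Nat.prime_of_mem_primesBelow hp)
          _ ≤ ∑' n, b n := hb.sum_le_tsum _ fun n _ => hb₀ n

theorem sum_Ioc_div_sqrt_le_of_isMultiplicative {g : ArithmeticFunction ℝ}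
    (hg : g.IsMultiplicative) (hsq : ∀ p k : ℕ, p.Prime → 2 ≤ k → g (p ^ k) = 0) {b : ℕ → ℝ}
    (hb : Summable b) (hb₀ : ∀ n, 0 ≤ b n)
    (hgb : ∀ p : ℕ, p.Prime → |g p - 1| / p + |g p| / p ^ 2 ≤ b p) (N : ℕ) :
    ∑ n ∈ Ioc 0 N, g n / √(n : ℝ) ≤ 2 * √(N : ℝ) * Real.exp (∑' n, b n) :=
  calc ∑ n ∈ Ioc 0 N, g n / √(n : ℝ) = ∑ n ∈ Ioc 0 N, (g * μ * ζ) n / √(n : ℝ) := by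
        rw [mul_assoc, coe_moebius_mul_coe_zeta, mul_one]
    _ ≤ 2 * √(N : ℝ) * ∑ d ∈ Ioc 0 N, |(g * μ) d| / d := sum_Ioc_mul_zeta_div_sqrt_le _ _
    _ ≤ 2 * √(N : ℝ) * Real.exp (∑' n, b n) := by
        gcongr
        exact sum_Ioc_abs_mul_moebius_div_le_exp hg hsq hb hb₀ hgb N

theorem summable_inv_mul_sqrt : Summable fun n : ℕ => ((n : ℝ) * √(n : ℝ))⁻¹ := by
  refine (Real.summable_nat_rpow_inv.2 (by norm_num : (1 : ℝ) < 3 / 2)).congr fun n => ?_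
  rw [show (3 / 2 : ℝ) = 1 + 1 / 2 by norm_num, Real.rpow_add' n.cast_nonneg (by norm_num),
    Real.rpow_one, Real.sqrt_eq_rpow]

theorem sqrt_add_three_div_local_factor_le {p : ℝ} (hp : 2 ≤ p) :
    |(√p + 3) / (p - 1) * √p - 1| / p + |(√p + 3) / (p - 1) * √p| / p ^ 2 ≤ 16 / (p * √p) := by
  have hp' : p = √p ^ 2 := (Real.sq_sqrt (by linarith)).symm
  set s := √p
  rw [hp']
  have hs : 1 < s := by nlinarith [Real.sqrt_nonneg p]
  have hden : 0 < s ^ 2 - 1 := by nlinarith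
  have hx : (s + 3) / (s ^ 2 - 1) * s - 1 = (3 * s + 1) / (s ^ 2 - 1) := by
    field_simp; ring
  have hsum : (3 * s + 1) / (s ^ 2 - 1) / s ^ 2 + (s + 3) / (s ^ 2 - 1) * s / (s ^ 2) ^ 2 =
      (3 * s ^ 2 + 2 * s + 3) / ((s ^ 2 - 1) * (s ^ 2 * s)) := by
    field_simp; ring
  rw [hx, abs_of_pos (by positivity), abs_of_pos (by positivity), hsum,
    div_le_div_iff₀ (by positivity) (by positivity)]
  calc (3 * s ^ 2 + 2 * s + 3) * (s ^ 2 * s) ≤ 16 * (s ^ 2 - 1) * (s ^ 2 * s) := by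
        gcongr
        nlinarith
    _ = 16 * ((s ^ 2 - 1) * (s ^ 2 * s)) := by ring

theorem squarefree_multiplicative_partial_sums (a : ℕ → ℝ) (h1 : a 1 = 1)
    (hp : ∀ p : ℕ, p.Prime → a p = (Real.sqrt p + 3) / ((p : ℝ) - 1))
    (hsf : ∀ n : ℕ, ¬ Squarefree n → a n = 0)
    (hmul : ∀ m n : ℕ, Nat.Coprime m n → a (m * n) = a m * a n) :
    ∃ A : ℝ, 0 < A ∧ ∀ M : ℝ, 1 ≤ M →
      (∑ n ∈ Finset.Icc 1 ⌊M⌋₊, a n) ≤ A * Real.sqrt M := by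
  let G : ArithmeticFunction ℝ := ⟨fun n => a n * √(n : ℝ), by simp⟩
  have hG : G.IsMultiplicative := by
    refine ⟨by simp [G, h1], fun {m n} hmn => ?_⟩
    simp only [G, coe_mk, hmul m n hmn, Nat.cast_mul, Real.sqrt_mul (Nat.cast_nonneg m)]
    ring
  have hG_sq : ∀ q k : ℕ, q.Prime → 2 ≤ k → G (q ^ k) = 0 := fun q k hq hk => by
    have : ¬ Squarefree (q ^ k) := fun h => by
      have := ((Nat.squarefree_pow_iff hq.ne_one (by omega)).1 h).2
      omega
    simp only [G, coe_mk, hsf _ this, zero_mul]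
  have hG_prime : ∀ q : ℕ, q.Prime → |G q - 1| / q + |G q| / q ^ 2 ≤ 16 / (q * √(q : ℝ)) :=
    fun q hq => by
      simpa only [G, coe_mk, hp q hq] using
        sqrt_add_three_div_local_factor_le (p := q) (by exact_mod_cast hq.two_le)
  refine ⟨2 * Real.exp (∑' n : ℕ, 16 / (n * √(n : ℝ))), by positivity, fun M hM => ?_⟩
  calc ∑ n ∈ Icc 1 ⌊M⌋₊, a n = ∑ n ∈ Ioc 0 ⌊M⌋₊, G n / √(n : ℝ) := by
        refine sum_congr (by ext; simp; omega) fun n hn => ?_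
        have hn : 0 < √(n : ℝ) := Real.sqrt_pos.2 (by exact_mod_cast (mem_Ioc.1 hn).1)
        simp only [G, coe_mk, mul_div_cancel_right₀ _ hn.ne']
    _ ≤ 2 * √(⌊M⌋₊ : ℝ) * Real.exp (∑' n : ℕ, 16 / (n * √(n : ℝ))) :=
        sum_Ioc_div_sqrt_le_of_isMultiplicative hG hG_sq (summable_inv_mul_sqrt.mul_left 16)
          (fun n => by positivity) hG_prime _
    _ ≤ 2 * Real.exp (∑' n : ℕ, 16 / (n * √(n : ℝ))) * √M := by
        rw [mul_right_comm]
        gcongr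
        exact Nat.floor_le (by linarith)

end
end

section
/- Let q be a positive integer and m an integer with gcd(m,q) = 1. Then ∑⁺_{χ mod q} χ(m) = (1/2)·∑_{vw = q, m ≡ 1 (mod w)} μ(v)φ(w) + (1/2)·∑_{vw = q, m ≡ −1 (mod w)} μ(v)φ(w), where in each sum (v,w) runs over ordered pairs of positive integers with vw = q satisfying the stated congruence. -/
open scoped Real
open Complex

noncomputable section

/-!
Since `χ(-1) = ±1`, we have `[χ even] χ(m) = (χ(m) + χ(-m)) / 2`, so it suffices to evaluate
`S_n(a) = ∑_{χ primitive mod n} χ(a)` at `a = ±m`. Every character mod `n` is induced by a unique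
primitive character, whose level is its conductor `d ∣ n`; hence `∑_{d ∣ n} S_d(a)` is the full
character sum `φ(n) [a ≡ 1 mod n]`, and Möbius inversion gives
`S_q(a) = ∑_{vw = q} μ(v) φ(w) [a ≡ 1 mod w]`.
-/

namespace DirichletCharacter

open ArithmeticFunction
open scoped ArithmeticFunction.Moebius Classical

variable {R : Type*}

theorem sum_apply_eq_sum_divisors_sum_isPrimitive [CommRing R] [IsDomain R] {n : ℕ} [NeZero n]
    {a : ℤ} (ha : IsCoprime a n) :
    ∑ χ : DirichletCharacter R n, χ a =
      ∑ d ∈ n.divisors, ∑ ψ : DirichletCharacter R d with ψ.IsPrimitive, ψ a := by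
  rw [← Finset.sum_fiberwise_of_maps_to (g := conductor) fun χ _ ↦
    Nat.mem_divisors.mpr ⟨χ.conductor_dvd_level, NeZero.ne n⟩]
  refine Finset.sum_congr rfl fun d hd ↦ ?_
  have hdn := Nat.dvd_of_mem_divisors hd
  refine (Finset.sum_nbij (changeLevel hdn) ?_ (changeLevel_injective hdn).injOn ?_
    fun ψ _ ↦ (changeLevel_eq_cast_of_dvd' ψ hdn ha).symm).symm
  · intro ψ hψ
    simp only [Finset.mem_filter, Finset.mem_univ, true_and] at hψ ⊢
    rw [conductor_changeLevel, hψ]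
  · intro χ hχ
    simp only [Finset.coe_filter, Finset.mem_univ, true_and, Set.mem_ofPred_eq] at hχ
    obtain ⟨_, ψ, hψ⟩ : χ.FactorsThrough d := hχ ▸ χ.factorsThrough_conductor
    rw [hψ, conductor_changeLevel] at hχ
    exact ⟨ψ, by simpa [isPrimitive_def] using hχ, hψ.symm⟩

theorem sum_isPrimitive_apply_eq_sum_moebius [Field R] [IsSepClosed R] [CharZero R] {n : ℕ}
    [NeZero n] {a : ℤ} (ha : IsCoprime a n) :
    ∑ χ : DirichletCharacter R n with χ.IsPrimitive, χ a =
      ∑ w ∈ n.divisors, if (a : ZMod w) = 1 then (μ (n / w) * w.totient : R) else 0 := by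
  have hinv := (sum_eq_iff_sum_mul_moebius_eq_on (R := R)
    (f := fun d ↦ ∑ ψ : DirichletCharacter R d with ψ.IsPrimitive, ψ a)
    (g := fun k ↦ if (a : ZMod k) = 1 then (k.totient : R) else 0)
    {k | k ∣ n} fun _ _ h hk ↦ h.trans hk).mp (fun k hk hkn ↦ by
      have : NeZero k := ⟨hk.ne'⟩
      rw [← sum_apply_eq_sum_divisors_sum_isPrimitive (ha.of_isCoprime_of_dvd_right
        (Int.natCast_dvd_natCast.mpr hkn)), sum_characters_eq]) n (Nat.pos_of_neZero n) dvd_rfl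
  rw [← hinv, Nat.sum_divisorsAntidiagonal'
    (f := fun x y ↦ (μ x : R) * if (a : ZMod y) = 1 then (y.totient : R) else 0)]
  simp only [mul_ite, mul_zero]

theorem indicator_even_apply [Field R] [NeZero (2 : R)] {n : ℕ}
    (P : DirichletCharacter R n → Prop) [DecidablePred P] (χ : DirichletCharacter R n)
    (x : ZMod n) :
    {χ' | P χ' ∧ χ'.Even}.indicator (fun χ' ↦ χ' x) χ =
      (if P χ then χ x + χ (-x) else 0) / 2 := by
  by_cases hP : P χ
  · rcases χ.even_or_odd with hχ | hχ
    · rw [Set.indicator_of_mem (show χ ∈ {χ' | P χ' ∧ χ'.Even} from ⟨hP, hχ⟩), if_pos hP,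
        hχ.eval_neg]
      field_simp
      ring
    · rw [Set.indicator_of_notMem fun h ↦ hχ.not_even _ h.2, if_pos hP, hχ.eval_neg]
      simp
  · rw [Set.indicator_of_notMem fun h ↦ hP h.1, if_neg hP, zero_div]

end DirichletCharacter

theorem orthogonality_even_primitive (q : ℕ) (hq : 0 < q)
    (m : ℤ) (hm : Int.gcd m q = 1) :
    evenPrimSum q (fun χ => χ (m : ZMod q)) =
      (((1 / 2 : ℝ) * ∑ w ∈ q.divisors,
          (if (m : ZMod w) = 1 then
            ((ArithmeticFunction.moebius (q / w) : ℤ) : ℝ) * (Nat.totient w : ℝ) else 0) +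
        (1 / 2 : ℝ) * ∑ w ∈ q.divisors,
          (if (m : ZMod w) = -1 then
            ((ArithmeticFunction.moebius (q / w) : ℤ) : ℝ) * (Nat.totient w : ℝ) else 0) : ℝ)
        : ℂ) := by
  classical
  have : NeZero q := ⟨hq.ne'⟩
  have hcop : IsCoprime m q := Int.isCoprime_iff_gcd_eq_one.mpr hm
  have hneg (w : ℕ) : ((-m : ℤ) : ZMod w) = 1 ↔ (m : ZMod w) = -1 := by
    rw [Int.cast_neg, neg_eq_iff_eq_neg]
  calc evenPrimSum q (fun χ => χ (m : ZMod q))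
      = ∑ χ : DirichletCharacter ℂ q, (if χ.IsPrimitive then χ m + χ (-m : ℤ) else 0) / 2 := by
        rw [evenPrimSum, dif_neg hq.ne']
        refine Finset.sum_congr rfl fun χ _ ↦ ?_
        rw [Int.cast_neg]
        exact DirichletCharacter.indicator_even_apply _ χ _
    _ = ((∑ χ : DirichletCharacter ℂ q with χ.IsPrimitive, χ m) +
          ∑ χ : DirichletCharacter ℂ q with χ.IsPrimitive, χ (-m : ℤ)) / 2 := by
        rw [← Finset.sum_add_distrib, Finset.sum_div, Finset.sum_filter]
        simp only [ite_div, zero_div]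
    _ = _ := by
        rw [DirichletCharacter.sum_isPrimitive_apply_eq_sum_moebius hcop,
          DirichletCharacter.sum_isPrimitive_apply_eq_sum_moebius hcop.neg_left]
        simp_rw [hneg]
        push_cast [apply_ite Complex.ofReal]
        ring
end
end
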